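/- Let k be a field and let U = ⊕_{i∈ℤ} U_i and V = ⊕_{i∈ℤ} V_i be ℤ-graded k-vector spaces such that V_i = 0 for all but finitely many i. Let a ∈ ℤ, let q ≥ 1 be an integer, and let ψ₊, ψ₋ : U → V be linear maps with ψ₊(U_i) ⊆ V_{i+a} and ψ₋(U_i) ⊆ V_{i+a+q} for all i ∈ ℤ. Suppose there are integers B and T with B ≤ T + 1 such that ψ₊ restricts to a bijection from U_{i−a} onto V_i for every i ≥ B, and ψ₋ restricts to a bijection from U_{i−a−q} onto V_i for every i ≤ T. Then for every k-vector space Z, every linear map F : V → Z satisfying F ∘ ψ₊ = F ∘ ψ₋ is the zero map. -/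

import Mathlib

/-!
If `v = ψ₊ u ∈ V_i`, then `F v = F (ψ₋ u)` with `ψ₋ u ∈ V_{i+q}`; so for `i ≥ B`, where `ψ₊` is
onto `V_i`, `F` vanishes on `V_i` once it vanishes on `V_{i+q}`. Descending induction from above
the (finite) support of the grading kills `F` on every `V_i` with `i ≥ B`; symmetrically, with the
roles of `ψ₊` and `ψ₋` swapped, ascending induction kills it on every `V_i` with `i ≤ T`.
As `B ≤ T + 1`, that is every degree.
-/

theorem Int.forall_ge_of_step_down {P : ℤ → Prop} {q N B : ℤ} (hq : 0 < q)
    (hbase : ∀ i, N < i → P i) (hstep : ∀ i, B ≤ i → P (i + q) → P i)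
    (i : ℤ) (hi : B ≤ i) : P i :=
  if h : N < i then hbase i h
  else hstep i hi (Int.forall_ge_of_step_down hq hbase hstep (i + q) (by omega))
termination_by (N + 1 - i).toNat
decreasing_by omega

theorem Int.forall_le_of_step_up {P : ℤ → Prop} {q M T : ℤ} (hq : 0 < q)
    (hbase : ∀ i, i < M → P i) (hstep : ∀ i, i ≤ T → P (i - q) → P i)
    (i : ℤ) (hi : i ≤ T) : P i := by
  simpa using Int.forall_ge_of_step_down (P := fun j => P (-j)) (N := -M) (B := -T) hq
    (fun j hj => hbase (-j) (by omega))
    (fun j hj h => hstep (-j) (by omega) (by rwa [neg_add'] at h))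
    (-i) (by omega)

theorem LinearMap.le_ker_of_surjOn_of_comp_eq {R U V Z : Type*} [Semiring R] [AddCommMonoid U]
    [Module R U] [AddCommMonoid V] [Module R V] [AddCommMonoid Z] [Module R Z]
    {F : V →ₗ[R] Z} {f g : U →ₗ[R] V} (hFfg : F ∘ₗ f = F ∘ₗ g)
    {S : Set U} {W W' : Submodule R V} (hf : Set.SurjOn f S W) (hg : Set.MapsTo g S W')
    (hW' : W' ≤ LinearMap.ker F) :
    W ≤ LinearMap.ker F := by
  intro v hv
  obtain ⟨u, hu, rfl⟩ := hf hv
  rw [LinearMap.mem_ker, ← LinearMap.comp_apply, hFfg, LinearMap.comp_apply]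
  exact hW' (hg hu)

theorem stmt7_general (k : Type*) [Field k]
    (U V : Type*) [AddCommGroup U] [Module k U] [AddCommGroup V] [Module k V]
    (𝒰 : ℤ → Submodule k U) (𝒱 : ℤ → Submodule k V)
    (hV : DirectSum.IsInternal 𝒱)
    (hVfin : {i : ℤ | 𝒱 i ≠ ⊥}.Finite)
    (a q : ℤ) (hq : 1 ≤ q)
    (ψp ψm : U →ₗ[k] V)
    (hψp : ∀ i : ℤ, ∀ x ∈ 𝒰 i, ψp x ∈ 𝒱 (i + a))
    (hψm : ∀ i : ℤ, ∀ x ∈ 𝒰 i, ψm x ∈ 𝒱 (i + a + q))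
    (B T : ℤ) (hBT : B ≤ T + 1)
    (hbijp : ∀ i : ℤ, B ≤ i → Set.BijOn ψp (𝒰 (i - a) : Set U) (𝒱 i : Set V))
    (hbijm : ∀ i : ℤ, i ≤ T → Set.BijOn ψm (𝒰 (i - a - q) : Set U) (𝒱 i : Set V)) :
    ∀ (Z : Type*) [AddCommGroup Z] [Module k Z] (F : V →ₗ[k] Z),
      F.comp ψp = F.comp ψm → F = 0 := by
  intro Z _ _ F hF
  obtain ⟨N, hN⟩ := hVfin.bddAbove
  obtain ⟨M, hM⟩ := hVfin.bddBelow
  have hbot : ∀ i, (N < i ∨ i < M) → 𝒱 i ≤ LinearMap.ker F := by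
    intro i hi
    have h𝒱 : 𝒱 i = ⊥ := by
      by_contra h
      rcases hi with hi | hi <;> linarith [hN h, hM h]
    simp [h𝒱]
  have hhigh : ∀ i, B ≤ i → 𝒱 i ≤ LinearMap.ker F :=
    Int.forall_ge_of_step_down (by omega : 0 < q) (fun i hi => hbot i (.inl hi)) fun i hi =>
      LinearMap.le_ker_of_surjOn_of_comp_eq hF (hbijp i hi).surjOn
        fun x hx => by simpa using hψm (i - a) x hx
  have hlow : ∀ i, i ≤ T → 𝒱 i ≤ LinearMap.ker F :=
    Int.forall_le_of_step_up (by omega : 0 < q) (fun i hi => hbot i (.inr hi)) fun i hi =>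
      LinearMap.le_ker_of_surjOn_of_comp_eq hF.symm (hbijm i hi).surjOn
        fun x hx => by simpa [sub_add_eq_add_sub] using hψp (i - a - q) x hx
  refine LinearMap.ker_eq_top.mp (top_unique ?_)
  rw [← hV.submodule_iSup_eq_top]
  exact iSup_le fun i => (le_or_gt B i).elim (hhigh i) fun hi => hlow i (by omega)

theorem stmt7 (k : Type*) [Field k]
    (U V : Type*) [AddCommGroup U] [Module k U] [AddCommGroup V] [Module k V]
    (𝒰 : ℤ → Submodule k U) (𝒱 : ℤ → Submodule k V)
    (hU : DirectSum.IsInternal 𝒰) (hV : DirectSum.IsInternal 𝒱)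
    (hVfin : {i : ℤ | 𝒱 i ≠ ⊥}.Finite)
    (a q : ℤ) (hq : 1 ≤ q)
    (ψp ψm : U →ₗ[k] V)
    (hψp : ∀ i : ℤ, ∀ x ∈ 𝒰 i, ψp x ∈ 𝒱 (i + a))
    (hψm : ∀ i : ℤ, ∀ x ∈ 𝒰 i, ψm x ∈ 𝒱 (i + a + q))
    (B T : ℤ) (hBT : B ≤ T + 1)
    (hbijp : ∀ i : ℤ, B ≤ i → Set.BijOn ψp (𝒰 (i - a) : Set U) (𝒱 i : Set V))
    (hbijm : ∀ i : ℤ, i ≤ T → Set.BijOn ψm (𝒰 (i - a - q) : Set U) (𝒱 i : Set V)) :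
    ∀ (Z : Type*) [AddCommGroup Z] [Module k Z] (F : V →ₗ[k] Z),
      F.comp ψp = F.comp ψm → F = 0 :=
  stmt7_general k U V 𝒰 𝒱 hV hVfin a q hq ψp ψm hψp hψm B T hBT hbijp hbijm
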